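/- Optimal partitions have no empty intervals: if φ: [0,∞) → [0,∞) is strictly convex and {I_j} ∈ 𝒞_n minimizes (1/n)·Σ_j φ(n/λ(I_j)^{1/2}), where λ(I) = π²/|I|² for nonempty I (the Laplacian case p = w = 1, q = 0) and λ(∅) = +∞, then all intervals I_j are nonempty, i.e. x_{j−1} < x_j for all j. -/

import Mathlib

open Real Set

/-!
Jensen's inequality bounds the cost of any partition below by `φ(1/π)`, the cost of the uniform
partition. A minimizer therefore attains equality in Jensen's inequality, which for strictly
convex `φ` forces all its intervals to have the same length `1/n`.
-/

theorem Fin.sum_univ_succ_sub_castSucc {G : Type*} [AddCommGroup G] (n : ℕ)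
    (x : Fin (n + 1) → G) : ∑ j : Fin n, (x j.succ - x j.castSucc) = x (Fin.last n) - x 0 := by
  induction n with
  | zero => simp
  | succ n ih =>
    rw [Fin.sum_univ_castSucc]
    simp only [Fin.succ_castSucc]
    rw [ih fun i ↦ x i.castSucc, Fin.succ_last, Fin.castSucc_zero]
    abel

theorem StrictConvexOn.eq_of_sum_map_le_card_mul {s : Set ℝ} {φ : ℝ → ℝ}
    (hφ : StrictConvexOn ℝ s φ) {ι : Type*} [Fintype ι] {p : ι → ℝ} {m : ℝ}
    (hp : ∀ i, p i ∈ s) (hsum : ∑ i, p i = Fintype.card ι * m)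
    (hcost : ∑ i, φ (p i) ≤ Fintype.card ι * φ m) (i : ι) : p i = m := by
  have hcard : (Fintype.card ι : ℝ) ≠ 0 := by
    have : Nonempty ι := ⟨i⟩
    positivity
  have hmean : ∑ j, (Fintype.card ι : ℝ)⁻¹ • p j = m := by
    rw [← Finset.smul_sum, hsum, smul_eq_mul, inv_mul_cancel_left₀ hcard]
  have hjensen : ∑ j, (Fintype.card ι : ℝ)⁻¹ • φ (p j) ≤ φ (∑ j, (Fintype.card ι : ℝ)⁻¹ • p j) := by
    rw [← Finset.smul_sum, hmean, smul_eq_mul, inv_mul_le_iff₀ (by positivity)]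
    exact hcost
  have hconst : ∀ j, p j = p i := fun j ↦
    hφ.eq_of_le_map_sum (fun _ _ ↦ by positivity) (by simp [hcard]) (fun j _ ↦ hp j) hjensen
      (Finset.mem_univ j) (Finset.mem_univ i)
  rw [← hmean]
  simp [hconst, hcard]

noncomputable def uniformPartition (n : ℕ) (i : Fin (n + 1)) : ℝ := (i : ℝ) / n

theorem uniformPartition_monotone (n : ℕ) : Monotone (uniformPartition n) := fun a b hab ↦
  div_le_div_of_nonneg_right (by exact_mod_cast hab) n.cast_nonneg

@[simp]
theorem uniformPartition_zero (n : ℕ) : uniformPartition n 0 = 0 := by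
  simp [uniformPartition]

@[simp]
theorem uniformPartition_last {n : ℕ} (hn : n ≠ 0) : uniformPartition n (Fin.last n) = 1 := by
  simp [uniformPartition, hn]

@[simp]
theorem uniformPartition_succ_sub_castSucc (n : ℕ) (j : Fin n) :
    uniformPartition n j.succ - uniformPartition n j.castSucc = 1 / n := by
  simp [uniformPartition, ← sub_div]

theorem stmt10_general (φ : ℝ → ℝ) (hφ : StrictConvexOn ℝ (Set.Ici 0) φ)
    (n : ℕ)
    (x : Fin (n + 1) → ℝ) (hx : Monotone x) (hx0 : x 0 = 0) (hx1 : x (Fin.last n) = 1)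
    (hmin : ∀ y : Fin (n + 1) → ℝ, Monotone y → y 0 = 0 → y (Fin.last n) = 1 →
      (1 / (n : ℝ)) * ∑ j : Fin n, φ ((n : ℝ) * (x j.succ - x j.castSucc) / π) ≤
        (1 / (n : ℝ)) * ∑ j : Fin n, φ ((n : ℝ) * (y j.succ - y j.castSucc) / π)) :
    ∀ j : Fin n, x j.castSucc < x j.succ := by
  intro j
  have hn : (n : ℝ) ≠ 0 := Nat.cast_ne_zero.2 j.pos.ne'
  have hsum : ∑ i : Fin n, (n : ℝ) * (x i.succ - x i.castSucc) / π = n * (1 / π) := by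
    rw [← Finset.sum_div, ← Finset.mul_sum, Fin.sum_univ_succ_sub_castSucc, hx1, hx0]
    ring
  have hcost : ∑ i : Fin n, φ ((n : ℝ) * (x i.succ - x i.castSucc) / π) ≤ n * φ (1 / π) := by
    have := hmin _ (uniformPartition_monotone n) (uniformPartition_zero n)
      (uniformPartition_last (by exact_mod_cast hn))
    simp only [uniformPartition_succ_sub_castSucc, mul_one_div_cancel hn, Finset.sum_const,
      Finset.card_univ, Fintype.card_fin, nsmul_eq_mul] at this
    exact le_of_mul_le_mul_left this (by positivity)
  have hscaled := hφ.eq_of_sum_map_le_card_mul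
    (fun i ↦ div_nonneg (mul_nonneg n.cast_nonneg (sub_nonneg.2 (hx i.castSucc_le_succ))) pi_pos.le)
    (by simpa using hsum) (by simpa using hcost) j
  have hlen : (n : ℝ) * (x j.succ - x j.castSucc) = 1 := by
    field_simp at hscaled
    exact hscaled
  exact sub_pos.1 (pos_of_mul_pos_right (hlen ▸ one_pos) n.cast_nonneg)

/-- Optimal partitions have no empty intervals (Laplacian case `p = w = 1`, `q = 0`, so
`λ(I) = π²/|I|²` and the cost is `(1/n) Σ_j φ(n |I_j|/π)`, with empty intervals
contributing `φ(0)`): if `φ` is strictly convex and `x` is a minimizing partition, then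
`x_{j−1} < x_j` for every `j`. -/
theorem stmt10 (φ : ℝ → ℝ) (hφ : StrictConvexOn ℝ (Set.Ici 0) φ)
    (h0 : ∀ t ∈ Set.Ici (0 : ℝ), 0 ≤ φ t)
    (n : ℕ) (hn : 1 ≤ n)
    (x : Fin (n + 1) → ℝ) (hx : Monotone x) (hx0 : x 0 = 0) (hx1 : x (Fin.last n) = 1)
    (hmin : ∀ y : Fin (n + 1) → ℝ, Monotone y → y 0 = 0 → y (Fin.last n) = 1 →
      (1 / (n : ℝ)) * ∑ j : Fin n, φ ((n : ℝ) * (x j.succ - x j.castSucc) / π) ≤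
        (1 / (n : ℝ)) * ∑ j : Fin n, φ ((n : ℝ) * (y j.succ - y j.castSucc) / π)) :
    ∀ j : Fin n, x j.castSucc < x j.succ :=
  stmt10_general φ hφ n x hx hx0 hx1 hmin
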